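/- arXiv:2502.02815 — 3 statements merged into one kernel-verified Lean document; each statement's English description precedes it below -/
import Mathlib

section
/- Let agent i have a submodular valuation vᵢ in an n-agent fair division instance with entitlements wⱼ > 0 summing to 1. If allocation A satisfies the pairwise proportionality condition vᵢ(Aᵢ) ≥ (wᵢ/(wᵢ+wⱼ))·vᵢ(Aᵢ ∪ Aⱼ) for all j ≠ i, then vᵢ(Aᵢ) ≥ wᵢ·vᵢ(M), where M = A₁ ∪ … ∪ Aₙ. -/
/-!
Submodularity makes marginal contributions to `A i` subadditive over the disjoint bundles `A j`,
so `v M ≤ v (A i) + ∑_{j ≠ i} (v (A i ∪ A j) - v (A i))`. Pairwise proportionality bounds the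
`j`-th marginal contribution by `(w j / w i) · v (A i)`, and the weights `w j`, `j ≠ i`, sum to
`1 - w i`.
-/

open Finset

theorem submodular_union_biUnion_le {M ι : Type*} [DecidableEq M] [DecidableEq ι]
    (v : Finset M → ℝ) (hsubmod : ∀ S T : Finset M, v (S ∪ T) + v (S ∩ T) ≤ v S + v T)
    (B : Finset M) (A : ι → Finset M) (s : Finset ι) (hs : (s : Set ι).PairwiseDisjoint A) :
    v (B ∪ s.biUnion A) ≤ v B + ∑ j ∈ s, (v (B ∪ A j) - v B) := by
  induction s using Finset.induction_on with
  | empty => simp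
  | @insert j s hjs ih =>
    have hdisj : Disjoint (s.biUnion A) (A j) := by
      refine disjoint_biUnion_left _ _ _ |>.mpr fun k hk => hs ?_ ?_ (ne_of_mem_of_not_mem hk hjs)
      · exact mem_coe.2 (mem_insert_of_mem hk)
      · exact mem_coe.2 (mem_insert_self j s)
    have hinter : (B ∪ s.biUnion A) ∩ (B ∪ A j) = B := by
      rw [← union_inter_distrib_left, disjoint_iff_inter_eq_empty.mp hdisj, union_empty]
    have hunion : (B ∪ s.biUnion A) ∪ (B ∪ A j) = B ∪ (insert j s).biUnion A := by
      rw [biUnion_insert, union_union_distrib_left B (A j), union_comm (B ∪ A j)]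
    have hstep := hsubmod (B ∪ s.biUnion A) (B ∪ A j)
    rw [hinter, hunion] at hstep
    rw [sum_insert hjs]
    linarith [ih (hs.subset (by simp))]

theorem mul_sub_le_of_div_add_mul_le {a b x y : ℝ} (ha : 0 < a) (hb : 0 < b)
    (h : a / (a + b) * x ≤ y) : a * (x - y) ≤ b * y := by
  rw [div_mul_eq_mul_div, div_le_iff₀ (add_pos ha hb)] at h
  linarith

theorem stmt8_general {M : Type*} [Fintype M] [DecidableEq M] {n : ℕ}
    (w : Fin n → ℝ) (hw : ∀ j, 0 < w j) (hwsum : ∑ j, w j = 1)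
    (i : Fin n) (v : Finset M → ℝ)
    (hsubmod : ∀ S T : Finset M, v (S ∪ T) + v (S ∩ T) ≤ v S + v T)
    (A : Fin n → Finset M)
    (hAdisj : ∀ j k, j ≠ k → Disjoint (A j) (A k))
    (hAcover : Finset.univ.biUnion A = Finset.univ)
    (hpprop : ∀ j, j ≠ i → (w i / (w i + w j)) * v (A i ∪ A j) ≤ v (A i)) :
    w i * v Finset.univ ≤ v (A i) := by
  set others := univ.erase i
  have hcover : A i ∪ others.biUnion A = univ := by
    rw [← biUnion_insert, insert_erase (mem_univ i), hAcover]
  have hsub := submodular_union_biUnion_le v hsubmod (A i) A others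
    fun j _ k _ hjk => hAdisj j k hjk
  have hmarginal : ∀ j ∈ others, w i * (v (A i ∪ A j) - v (A i)) ≤ w j * v (A i) :=
    fun j hj => mul_sub_le_of_div_add_mul_le (hw i) (hw j) (hpprop j (ne_of_mem_erase hj))
  have hothers : ∑ j ∈ others, w j = 1 - w i := by
    rw [sum_erase_eq_sub (mem_univ i), hwsum]
  calc w i * v univ
      ≤ w i * (v (A i) + ∑ j ∈ others, (v (A i ∪ A j) - v (A i))) := by
        rw [← hcover]; exact mul_le_mul_of_nonneg_left hsub (hw i).le
    _ = w i * v (A i) + ∑ j ∈ others, w i * (v (A i ∪ A j) - v (A i)) := by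
        rw [mul_add, mul_sum]
    _ ≤ w i * v (A i) + ∑ j ∈ others, w j * v (A i) :=
        add_le_add_right (sum_le_sum hmarginal) _
    _ = v (A i) := by rw [← sum_mul, hothers]; ring

/-- For a submodular valuation, pairwise proportionality implies proportionality. -/
theorem stmt8 {M : Type*} [Fintype M] [DecidableEq M] {n : ℕ}
    (w : Fin n → ℝ) (hw : ∀ j, 0 < w j) (hwsum : ∑ j, w j = 1)
    (i : Fin n) (v : Finset M → ℝ) (hv0 : v ∅ = 0)
    (hsubmod : ∀ S T : Finset M, v (S ∪ T) + v (S ∩ T) ≤ v S + v T)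
    (A : Fin n → Finset M)
    (hAdisj : ∀ j k, j ≠ k → Disjoint (A j) (A k))
    (hAcover : Finset.univ.biUnion A = Finset.univ)
    (hpprop : ∀ j, j ≠ i → (w i / (w i + w j)) * v (A i ∪ A j) ≤ v (A i)) :
    w i * v Finset.univ ≤ v (A i) :=
  stmt8_general w hw hwsum i v hsubmod A hAdisj hAcover hpprop
end

section
/- Let v : 2^M → ℝ be additive with v({t}) ∈ {−1, 0, 1} for every item t, and let n ≥ 1, m = |M|. There exists an n-partition P of M such that |v(Pᵢ) − v(Pⱼ)| ≤ 1 for all i, j, and ⌊v(M)/n⌋ ≤ v(Pᵢ) ≤ ⌈v(M)/n⌉ for all i. -/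
/-!
Deal the items out one at a time: an item of nonnegative value goes to a bundle of least value,
one of nonpositive value to a bundle of greatest value. Either way all bundle values stay within
`1` of each other. Integers `x₁, …, xₙ` that are pairwise within `1` of each other lie between
the floor and the ceiling of their mean: for each `i` we have `xⱼ ≤ xᵢ + 1` for all `j`, strictly
for `j = i`, so `∑ xⱼ < n (xᵢ + 1)`, and symmetrically `n (xᵢ - 1) < ∑ xⱼ`.
-/

open Finset Function

theorem sum_filter_insert_update {ι M α : Type*} [AddCommMonoid α] [DecidableEq ι] [DecidableEq M]
    {s : Finset M} {a : M} (ha : a ∉ s) (f : M → ι) (i₀ i : ι) (w : M → α) :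
    ∑ t ∈ insert a s with update f a i₀ t = i, w t =
      update (fun i ↦ ∑ t ∈ s with f t = i, w t) i₀ ((∑ t ∈ s with f t = i₀, w t) + w a) i := by
  have hs : ∀ i, ∑ t ∈ s with update f a i₀ t = i, w t = ∑ t ∈ s with f t = i, w t := fun i ↦
    sum_congr (filter_congr fun t ht ↦ by rw [update_of_ne (ne_of_mem_of_not_mem ht ha)])
      fun _ _ ↦ rfl
  rw [filter_insert, update_self]
  rcases eq_or_ne i i₀ with rfl | hi
  · rw [if_pos rfl, sum_insert (fun h ↦ ha (mem_filter.1 h).1), hs, update_self, add_comm]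
  · rw [if_neg (Ne.symm hi), hs, update_of_ne hi]

section Balancing

variable {ι M α : Type*} [AddCommGroup α] [LinearOrder α] [IsOrderedAddMonoid α]

theorem abs_update_sub_update_le {x : ι → α} {c y : α} [DecidableEq ι] {i₀ : ι}
    (hx : ∀ i j, |x i - x j| ≤ c) (hy : ∀ j, |y - x j| ≤ c) (i j : ι) :
    |update x i₀ y i - update x i₀ y j| ≤ c := by
  by_cases hi : i = i₀ <;> by_cases hj : j = i₀
  · simpa [hi, hj] using (abs_nonneg _).trans (hy j)
  · rw [hi, update_self, update_of_ne hj]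
    exact hy j
  · rw [hj, update_self, update_of_ne hi, abs_sub_comm]
    exact hy i
  · rw [update_of_ne hi, update_of_ne hj]
    exact hx i j

theorem exists_abs_sum_filter_sub_le [Fintype ι] [Nonempty ι] [DecidableEq ι]
    (w : M → α) {c : α} (hc : 0 ≤ c) (hw : ∀ t, |w t| ≤ c) (s : Finset M) :
    ∃ f : M → ι, ∀ i j, |∑ t ∈ s with f t = i, w t - ∑ t ∈ s with f t = j, w t| ≤ c := by
  classical
  induction s using Finset.induction_on with
  | empty => exact ⟨fun _ ↦ Classical.arbitrary ι, by simpa using hc⟩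
  | insert a s ha ih =>
    obtain ⟨f, hf⟩ := ih
    set V : ι → α := fun i ↦ ∑ t ∈ s with f t = i, w t
    obtain ⟨i₀, hi₀⟩ : ∃ i₀, ∀ j, |V i₀ + w a - V j| ≤ c := by
      rcases le_total 0 (w a) with hwa | hwa
      · obtain ⟨i₀, -, hmin⟩ := exists_min_image univ V univ_nonempty
        refine ⟨i₀, fun j ↦ abs_sub_le_iff.2 ⟨?_, ?_⟩⟩
        · calc V i₀ + w a - V j = (V i₀ - V j) + w a := by abel
            _ ≤ 0 + c := add_le_add (sub_nonpos.2 (hmin j (mem_univ _))) (le_of_abs_le (hw a))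
            _ = c := zero_add c
        · calc V j - (V i₀ + w a) ≤ V j - V i₀ := sub_le_sub_left (le_add_of_nonneg_right hwa) _
            _ ≤ c := le_of_abs_le (hf j i₀)
      · obtain ⟨i₀, -, hmax⟩ := exists_max_image univ V univ_nonempty
        refine ⟨i₀, fun j ↦ abs_sub_le_iff.2 ⟨?_, ?_⟩⟩
        · calc V i₀ + w a - V j ≤ V i₀ - V j := sub_le_sub_right (add_le_of_nonpos_right hwa) _
            _ ≤ c := le_of_abs_le (hf i₀ j)
        · calc V j - (V i₀ + w a) = (V j - V i₀) + -w a := by abel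
            _ ≤ 0 + c :=
              add_le_add (sub_nonpos.2 (hmax j (mem_univ _))) (neg_le.1 (abs_le.1 (hw a)).1)
            _ = c := zero_add c
    refine ⟨update f a i₀, fun i j ↦ ?_⟩
    rw [sum_filter_insert_update ha, sum_filter_insert_update ha]
    exact abs_update_sub_update_le hf hi₀ i j

end Balancing

theorem floor_mean_le_of_abs_sub_le_one {ι : Type*} [Fintype ι] {x : ι → ℤ}
    (hx : ∀ i j, |x i - x j| ≤ 1) (i : ι) :
    ⌊((∑ j, x j : ℤ) : ℝ) / Fintype.card ι⌋ ≤ x i := by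
  have hcard : (0 : ℝ) < Fintype.card ι := by exact_mod_cast Fintype.card_pos_iff.2 ⟨i⟩
  rw [Int.floor_le_iff, div_lt_iff₀ hcard]
  have : ∑ j, x j < ∑ _j : ι, (x i + 1) :=
    sum_lt_sum (fun j _ ↦ by linarith [le_of_abs_le (hx j i)]) ⟨i, mem_univ _, by omega⟩
  rw [sum_const, card_univ, nsmul_eq_mul] at this
  exact_mod_cast this.trans_eq (mul_comm _ _)

theorem le_ceil_mean_of_abs_sub_le_one {ι : Type*} [Fintype ι] {x : ι → ℤ}
    (hx : ∀ i j, |x i - x j| ≤ 1) (i : ι) :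
    x i ≤ ⌈((∑ j, x j : ℤ) : ℝ) / Fintype.card ι⌉ := by
  have hcard : (0 : ℝ) < Fintype.card ι := by exact_mod_cast Fintype.card_pos_iff.2 ⟨i⟩
  rw [Int.le_ceil_iff, lt_div_iff₀ hcard]
  have : ∑ _j : ι, (x i - 1) < ∑ j, x j :=
    sum_lt_sum (fun j _ ↦ by linarith [le_of_abs_le (hx i j)]) ⟨i, mem_univ _, by omega⟩
  rw [sum_const, card_univ, nsmul_eq_mul] at this
  exact_mod_cast (mul_comm _ _).trans_lt this

/-- For an additive valuation with singleton values in `{-1, 0, 1}`, there is an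
`n`-partition whose bundles all have values within 1 of each other, each value
lying between `⌊v(M)/n⌋` and `⌈v(M)/n⌉`. -/
theorem stmt12 {M : Type*} [Fintype M] [DecidableEq M]
    (u : M → ℝ) (hu : ∀ t, u t = -1 ∨ u t = 0 ∨ u t = 1)
    (n : ℕ) (hn : 1 ≤ n) :
    ∃ P : Fin n → Finset M,
      (∀ i j, i ≠ j → Disjoint (P i) (P j)) ∧
      Finset.univ.biUnion P = Finset.univ ∧
      (∀ i j, |(∑ t ∈ P i, u t) - ∑ t ∈ P j, u t| ≤ 1) ∧
      (∀ i, (⌊(∑ t : M, u t) / (n : ℝ)⌋ : ℝ) ≤ ∑ t ∈ P i, u t ∧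
        ∑ t ∈ P i, u t ≤ (⌈(∑ t : M, u t) / (n : ℝ)⌉ : ℝ)) := by
  choose z hz using fun t ↦ show ∃ k : ℤ, u t = k by
    rcases hu t with h | h | h
    exacts [⟨-1, by simp [h]⟩, ⟨0, by simp [h]⟩, ⟨1, by simp [h]⟩]
  have hz_abs : ∀ t, |z t| ≤ 1 := fun t ↦ by
    rcases hu t with h | h | h <;> rw [hz] at h <;> norm_cast at h <;> simp [h]
  have hsum : ∀ s : Finset M, ∑ t ∈ s, u t = ((∑ t ∈ s, z t : ℤ) : ℝ) := by simp [hz]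
  have : NeZero n := ⟨by omega⟩
  obtain ⟨f, hf⟩ := exists_abs_sum_filter_sub_le (ι := Fin n) z zero_le_one hz_abs univ
  have htotal : ∑ t, z t = ∑ i, ∑ t with f t = i, z t := (sum_fiberwise univ f z).symm
  refine ⟨fun i ↦ {t | f t = i}, fun i j hij ↦ disjoint_filter.2 fun _ _ h₁ h₂ ↦ hij (h₁ ▸ h₂),
    by ext; simp, fun i j ↦ ?_, fun i ↦ ⟨?_, ?_⟩⟩ <;> simp only [hsum, htotal]
  · exact_mod_cast hf i j
  · exact_mod_cast Fintype.card_fin n ▸ floor_mean_le_of_abs_sub_le_one hf i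
  · exact_mod_cast Fintype.card_fin n ▸ le_ceil_mean_of_abs_sub_le_one hf i
end

section
/- Let v : 2^M → ℝ be additive with v({t}) ∈ {−1, 0, 1} for every t ∈ M, and let n agents have equal entitlements. Then the maximin share of an agent with valuation v is ⌊v(M)/n⌋. -/
/-!
In any partition the poorest bundle is worth an integer no larger than the mean `v(M)/n`, hence at
most `⌊v(M)/n⌋`. Conversely, allocating the items greedily, each item of nonnegative value to a
currently poorest bundle and each item of negative value to a currently richest one, keeps all
bundle values within `1` of each other; the poorest of these integer values is then at least the
floor of their mean.
-/

open Finset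

lemma exists_intCast_sum_eq {ι : Type*} (s : Finset ι) {u : ι → ℝ}
    (hu : ∀ t, ∃ k : ℤ, u t = k) : ∃ k : ℤ, ∑ t ∈ s, u t = k := by
  choose w hw using hu
  exact ⟨∑ t ∈ s, w t, by push_cast; simp only [hw]⟩

lemma inf'_le_floor_sum_div_card {ι : Type*} (s : Finset ι) (hs : s.Nonempty) {x : ι → ℝ}
    (hx : ∀ i ∈ s, ∃ k : ℤ, x i = k) :
    s.inf' hs x ≤ ⌊(∑ i ∈ s, x i) / #s⌋ := by
  have hcard : (0 : ℝ) < #s := by exact_mod_cast hs.card_pos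
  obtain ⟨j, hj, hle⟩ : ∃ j ∈ s, x j ≤ (∑ i ∈ s, x i) / #s :=
    exists_le_of_sum_le hs (by simp [mul_div_cancel₀ _ hcard.ne'])
  obtain ⟨k, hk⟩ := hx j hj
  calc s.inf' hs x ≤ x j := inf'_le x hj
    _ = k := hk
    _ ≤ ⌊(∑ i ∈ s, x i) / #s⌋ := by exact_mod_cast Int.le_floor.2 (hk ▸ hle)

lemma floor_sum_div_card_le_inf' {ι : Type*} (s : Finset ι) (hs : s.Nonempty) {x : ι → ℝ}
    (hx : ∀ i ∈ s, ∃ k : ℤ, x i = k) (hbal : ∀ i ∈ s, ∀ j ∈ s, x i ≤ x j + 1) :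
    ⌊(∑ i ∈ s, x i) / #s⌋ ≤ s.inf' hs x := by
  have hcard : (0 : ℝ) < #s := by exact_mod_cast hs.card_pos
  obtain ⟨j, hj, hmin⟩ := exists_mem_eq_inf' hs x
  obtain ⟨k, hk⟩ := hx j hj
  have hsum : ∑ i ∈ s, x i < ∑ _i ∈ s, ((k : ℝ) + 1) :=
    sum_lt_sum (fun i hi => hk ▸ hbal i hi j hj) ⟨j, hj, by rw [hk]; linarith⟩
  rw [sum_const, nsmul_eq_mul, ← div_lt_iff₀' hcard] at hsum
  rw [hmin, hk]
  exact_mod_cast Int.floor_le_iff.2 hsum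

section BalancedAssignment

variable {M κ : Type*} [DecidableEq M] [DecidableEq κ] (u : M → ℝ)

lemma sum_filter_insert_update_eq {s : Finset M} {t : M} (ht : t ∉ s) (f : M → κ) (i j : κ) :
    ∑ x ∈ insert t s with Function.update f t i x = j, u x
      = ∑ x ∈ s with f x = j, u x + if i = j then u t else 0 := by
  have hs : ∀ x ∈ s, Function.update f t i x = f x :=
    fun x hx => Function.update_of_ne (ne_of_mem_of_not_mem hx ht) _ _
  rw [filter_insert, Function.update_self, filter_congr (fun x hx => by rw [hs x hx])]
  split_ifs with hij
  · rw [sum_insert (fun h => ht (mem_filter.1 h).1), add_comm]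
  · rw [add_zero]

variable [Fintype κ] [Nonempty κ]

lemma exists_assignment_sum_le_sum_add_one (hu : ∀ t, |u t| ≤ 1) (s : Finset M) :
    ∃ f : M → κ, ∀ i j,
      ∑ x ∈ s with f x = i, u x ≤ ∑ x ∈ s with f x = j, u x + 1 := by
  induction s using Finset.induction_on with
  | empty => exact ⟨fun _ => Classical.arbitrary κ, fun _ _ => by simp⟩
  | insert t s ht ih =>
    obtain ⟨f, hf⟩ := ih
    obtain ⟨jmin, hjmin⟩ := Finite.exists_min fun j => ∑ x ∈ s with f x = j, u x
    obtain ⟨jmax, hjmax⟩ := Finite.exists_max fun j => ∑ x ∈ s with f x = j, u x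
    obtain ⟨hneg, hpos⟩ := abs_le.1 (hu t)
    by_cases hsign : 0 ≤ u t
    · refine ⟨Function.update f t jmin, fun i j => ?_⟩
      simp only [sum_filter_insert_update_eq u ht]
      have := hf i j
      have := hjmin j
      split_ifs <;> subst_vars <;> linarith
    · refine ⟨Function.update f t jmax, fun i j => ?_⟩
      simp only [sum_filter_insert_update_eq u ht]
      have := hf i j
      have := hjmax i
      split_ifs <;> subst_vars <;> linarith

end BalancedAssignment

/-- For an additive valuation with singleton values in `{-1, 0, 1}` and `n`
equally entitled agents, the maximin share equals `⌊v(M)/n⌋`. -/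
theorem stmt13 {M : Type*} [Fintype M] [DecidableEq M]
    (u : M → ℝ) (hu : ∀ t, u t = -1 ∨ u t = 0 ∨ u t = 1)
    (n : ℕ) (hn : 0 < n) :
    IsGreatest {x : ℝ | ∃ P : Fin n → Finset M,
        (∀ i j, i ≠ j → Disjoint (P i) (P j)) ∧
        Finset.univ.biUnion P = Finset.univ ∧
        x = Finset.univ.inf' ⟨⟨0, hn⟩, Finset.mem_univ _⟩ (fun j => ∑ t ∈ P j, u t)}
      ((⌊(∑ t : M, u t) / (n : ℝ)⌋ : ℝ)) := by
  have hint : ∀ t, ∃ k : ℤ, u t = k := fun t => by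
    rcases hu t with h | h | h <;> rw [h]
    exacts [⟨-1, by simp⟩, ⟨0, by simp⟩, ⟨1, by simp⟩]
  have hbundle (P : Fin n → Finset M) (j : Fin n) (_ : j ∈ univ) :
      ∃ k : ℤ, ∑ t ∈ P j, u t = k := exists_intCast_sum_eq (P j) hint
  constructor
  · have : Nonempty (Fin n) := ⟨⟨0, hn⟩⟩
    obtain ⟨f, hf⟩ := exists_assignment_sum_le_sum_add_one (κ := Fin n) u
      (fun t => by rcases hu t with h | h | h <;> simp [h]) (univ : Finset M)
    refine ⟨fun j => {t | f t = j}, fun i j hij => disjoint_filter.2 fun t _ hi hj => hij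
      (hi.symm.trans hj), by ext t; simp, le_antisymm ?_ ?_⟩
    · simpa only [card_univ, Fintype.card_fin, sum_fiberwise] using
        floor_sum_div_card_le_inf' _ _ (hbundle _) fun i _ j _ => hf i j
    · simpa only [card_univ, Fintype.card_fin, sum_fiberwise] using
        inf'_le_floor_sum_div_card _ _ (hbundle fun j => {t | f t = j})
  · rintro x ⟨P, hdisj, hcov, rfl⟩
    have hsum : ∑ j, ∑ t ∈ P j, u t = ∑ t, u t := by
      rw [← sum_biUnion fun i _ j _ hij => hdisj i j hij, hcov]
    simpa only [card_univ, Fintype.card_fin, hsum] using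
      inf'_le_floor_sum_div_card _ _ (hbundle P)
end
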